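/- Proposition 8.1, even part (Model 4 values along the superurban renewal families with even third coordinate): For every N ∈ ℤ, the following hold in F: Z₄(0,0,2N) = x₆ · D₄^{N(N−1)} E₄^{N²}; Z₄(−1,1,2N) = x₁ · D₄^{N(N−1)} E₄^{N²}; Z₄(0,−1,2N) = x₂ · D₄^{N(N−1)} E₄^{N²}; and Z₄(1,0,2N) = x₃ · D₄^{N(N−1)} E₄^{N²}. (Under the projection φ of Section 8, these are the values of the hexahedron-recurrence solutions φ(A(0,0,2N+1)), φ(A(1/2,1/2,2N)), φ(A(0,1/2,2N+1/2)), φ(A(1/2,0,2N+1/2)) of Kenyon–Pemantle.) -/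

import Mathlib

noncomputable section

open MvPolynomial

abbrev F : Type := FractionRing (MvPolynomial (Fin 6) ℚ)

/-- The images of the six indeterminates in the field `F = ℚ(x₁,…,x₆)`. -/
def xv (t : Fin 6) : F := algebraMap (MvPolynomial (Fin 6) ℚ) F (X t)

def x1 : F := xv 0
def x2 : F := xv 1
def x3 : F := xv 2
def x4 : F := xv 3
def x5 : F := xv 4
def x6 : F := xv 5

/-- Chooses among six field elements according to the residue of `2(i-j)+3k` mod 6:
residues 5,2,4,1,3,0 select the 1st,…,6th element respectively. -/
def pick (v1 v2 v3 v4 v5 v6 : F) (i j k : ℤ) : F :=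
  if (2*(i-j)+3*k) % 6 = 5 then v1
  else if (2*(i-j)+3*k) % 6 = 2 then v2
  else if (2*(i-j)+3*k) % 6 = 4 then v3
  else if (2*(i-j)+3*k) % 6 = 1 then v4
  else if (2*(i-j)+3*k) % 6 = 3 then v5
  else v6

/-- α(i,j,k) = ⌊(P+i+2j)/3⌋ with P = i²+ij+j²+1. -/
def expA (i j : ℤ) : ℤ := Int.fdiv ((i^2+i*j+j^2+1) + i + 2*j) 3
/-- β(i,j,k) = ⌊(P+2i+j)/3⌋. -/
def expB (i j : ℤ) : ℤ := Int.fdiv ((i^2+i*j+j^2+1) + 2*i + j) 3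
/-- γ(i,j,k) = ⌊P/3⌋. -/
def expC (i j : ℤ) : ℤ := Int.fdiv (i^2+i*j+j^2+1) 3
/-- δ(i,j,k) = ⌊(k−1)²/4⌋. -/
def expD (k : ℤ) : ℤ := Int.fdiv ((k-1)^2) 4
/-- ε(i,j,k) = ⌊k²/4⌋. -/
def expE (k : ℤ) : ℤ := Int.fdiv (k^2) 4

def Y1'' : F := (x6^4 + x1*x2*x3*x6 + 2*x4*x5*x6^2 + x4^2*x5^2) / (x1*x3*x4)
def Y3'' : F := (x4*x5 + x6^2) / x3
def Y4'' : F := (x1*x2*x3 + x4*x5*x6 + x6^3) / (x3*x4)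

def A4 : F := x1 / x2
def B4 : F := x3 / x1
def C4 : F := (x6^6 + 2*x1*x2*x3*x6^3 + x1^2*x2^2*x3^2 + 3*x4*x5*x6^4
    + 2*x1*x2*x3*x4*x5*x6 + 3*x4^2*x5^2*x6^2 + x4^3*x5^3) / (x1*x3^2*x4*x5*x6)
def D4 : F := x4 / x5
def E4 : F := (x6^6 + 2*x1*x2*x3*x6^3 + x1^2*x2^2*x3^2 + 3*x4*x5*x6^4
    + 3*x1*x2*x3*x4*x5*x6 + 3*x4^2*x5^2*x6^2 + x4^3*x5^3) / (x1*x2*x3*x4^2*x6)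

/-- The Model 4 closed formula Z₄(i,j,k) of Theorem 3.4. -/
def Z4 (i j k : ℤ) : F :=
  pick Y1'' x2 Y3'' Y4'' x5 x6 i j k *
    A4 ^ expA i j * B4 ^ expB i j * C4 ^ expC i j * D4 ^ expD k * E4 ^ expE k

/-! Along `k = 2N` the selector residue `2(i-j)+3k` mod 6 and the exponents `α, β, γ` do not
see `k`, while `δ, ε` become `N(N-1)` and `N²`; hence
`Z₄(i,j,2N) = Z₄(i,j,0) D₄^{N(N-1)} E₄^{N²}`. At `k = 0` the four base points give `x₆`,
`x₂A₄ = x₁`, `x₂` and `x₂A₄B₄ = x₃`. -/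

lemma xv_ne_zero (t : Fin 6) : xv t ≠ 0 :=
  (map_ne_zero_iff _ (IsFractionRing.injective (MvPolynomial (Fin 6) ℚ) F)).mpr (X_ne_zero t)

lemma pick_two_mul (v1 v2 v3 v4 v5 v6 : F) (i j N : ℤ) :
    pick v1 v2 v3 v4 v5 v6 i j (2 * N) = pick v1 v2 v3 v4 v5 v6 i j 0 := by
  have h : (2 * (i - j) + 3 * (2 * N)) % 6 = (2 * (i - j) + 3 * 0) % 6 := by omega
  simp only [pick, h]

lemma expD_two_mul (N : ℤ) : expD (2 * N) = N * (N - 1) := by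
  rw [expD, show (2 * N - 1) ^ 2 = 1 + 4 * (N * (N - 1)) by ring,
    Int.fdiv_eq_ediv_of_nonneg _ (by norm_num)]
  omega

lemma expE_two_mul (N : ℤ) : expE (2 * N) = N ^ 2 := by
  rw [expE, show (2 * N) ^ 2 = N ^ 2 * 4 by ring, Int.mul_fdiv_cancel _ (by norm_num)]

lemma Z4_two_mul (i j N : ℤ) : Z4 i j (2 * N) = Z4 i j 0 * D4 ^ (N * (N - 1)) * E4 ^ (N ^ 2) := by
  have hD : expD 0 = 0 := by simpa using expD_two_mul 0
  have hE : expE 0 = 0 := by simpa using expE_two_mul 0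
  simp only [Z4, pick_two_mul, expD_two_mul, expE_two_mul, hD, hE, zpow_zero, mul_one]

lemma Z4_zero_zero_zero : Z4 0 0 0 = x6 := by
  norm_num [Z4, pick, expA, expB, expC, expD, expE, Int.fdiv_eq_ediv_of_nonneg]

lemma Z4_neg_one_one_zero : Z4 (-1) 1 0 = x1 := by
  norm_num [Z4, pick, expA, expB, expC, expD, expE, Int.fdiv_eq_ediv_of_nonneg, A4]
  exact mul_div_cancel₀ x1 (show x2 ≠ 0 from xv_ne_zero 1)

lemma Z4_zero_neg_one_zero : Z4 0 (-1) 0 = x2 := by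
  norm_num [Z4, pick, expA, expB, expC, expD, expE, Int.fdiv_eq_ediv_of_nonneg]

lemma Z4_one_zero_zero : Z4 1 0 0 = x3 := by
  norm_num [Z4, pick, expA, expB, expC, expD, expE, Int.fdiv_eq_ediv_of_nonneg, A4, B4]
  rw [mul_div_cancel₀ x1 (show x2 ≠ 0 from xv_ne_zero 1),
    mul_div_cancel₀ x3 (show x1 ≠ 0 from xv_ne_zero 0)]

/-- Proposition 8.1, even part: Model 4 values along the superurban renewal
families with even third coordinate. -/
theorem model4_superurban_even (N : ℤ) :
    Z4 0 0 (2*N) = x6 * D4 ^ (N*(N-1)) * E4 ^ (N^2) ∧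
    Z4 (-1) 1 (2*N) = x1 * D4 ^ (N*(N-1)) * E4 ^ (N^2) ∧
    Z4 0 (-1) (2*N) = x2 * D4 ^ (N*(N-1)) * E4 ^ (N^2) ∧
    Z4 1 0 (2*N) = x3 * D4 ^ (N*(N-1)) * E4 ^ (N^2) := by
  simp only [Z4_two_mul, Z4_zero_zero_zero, Z4_neg_one_one_zero, Z4_zero_neg_one_zero,
    Z4_one_zero_zero, and_self]
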